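/- For every integer N ≥ 1, the following identity holds in the polynomial ring ℚ[α, x₁, …, x_n]: ∑_{i=0}^N g_{(i)} · ĝ_{N−i} = 0, where g_{(0)} = ĝ_0 = 1, g_{(i)} := ∑_{j=1}^i α^{i−j} C(i−1, j−1) h_j(x₁,…,x_n) for i ≥ 1, and ĝ_m := ∑_{j=1}^m α^{m−j} C(m−1, j−1) (−1)^j e_j(x₁,…,x_n) for m ≥ 1. (Equivalently, ∑_i g^{(α,β)}_{(i)}(x) · g^{(β,α)}_{(1^{N−i})}(−x) = δ_{N,0}.) -/

import Mathlib

/-- The complete homogeneous symmetric polynomial `h_m(y₁,…,yₙ)`. -/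
noncomputable def hps {R : Type*} [CommRing R] (n m : ℕ) (y : Fin n → R) : R :=
  ∑ c ∈ Finset.Nat.antidiagonalTuple n m, ∏ i, y i ^ c i

/-- The elementary symmetric polynomial `e_m(y₁,…,yₙ)` (zero for `m > n`). -/
noncomputable def eps {R : Type*} [CommRing R] (n m : ℕ) (y : Fin n → R) : R :=
  ∑ S ∈ Finset.powersetCard m (Finset.univ : Finset (Fin n)), ∏ i ∈ S, y i

/-- `g_{(i)} = g^{(α,β)}_{(i)}(x)`, with `g_{(0)} = 1`. -/
noncomputable def grow {R : Type*} [CommRing R] (n : ℕ) (α : R) (x : Fin n → R) (i : ℕ) : R :=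
  if i = 0 then 1 else
    ∑ j ∈ Finset.Icc 1 i, α ^ (i - j) * ((i - 1).choose (j - 1) : R) * hps n j x

/-- `ĝ_m = g^{(β,α)}_{(1^m)}(-x)`, with `ĝ_0 = 1`. -/
noncomputable def ghat {R : Type*} [CommRing R] (n : ℕ) (α : R) (x : Fin n → R) (m : ℕ) : R :=
  if m = 0 then 1 else
    ∑ j ∈ Finset.Icc 1 m, α ^ (m - j) * ((m - 1).choose (j - 1) : R) * (-1 : R) ^ j * eps n j x

/-!
With `H(t) = ∏ᵢ 1/(1 - xᵢt) = ∑ hⱼ tʲ` and `E(t) = ∏ᵢ (1 - xᵢt) = ∑ (-1)ʲ eⱼ tʲ` we have `H E = 1`.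
The generating series of `g_{(i)}` and `ĝ_m` are `H` and `E` composed with `t = u / (1 - αu)`,
because `[uᵈ] (u / (1 - αu))ʲ = α^(d-j) C(d-1, j-1)`; substitution being a ring homomorphism,
their product is again `1`, whose coefficients in positive degree vanish.
-/

open Finset

namespace PowerSeries

variable {R : Type*} [CommRing R]

theorem coeff_mk_pow_pow_succ (α : R) (j t : ℕ) :
    coeff t ((mk fun s => α ^ s) ^ (j + 1)) = α ^ t * (j + t).choose j := by
  have : (mk fun s => α ^ s : R⟦X⟧) = rescale α (mk 1) := by simp [rescale_mk]
  rw [this, ← map_pow, mk_one_pow_eq_mk_choose_add, coeff_rescale, coeff_mk]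

theorem coeff_X_mul_mk_pow_pow {α : R} {j : ℕ} (hj : j ≠ 0) (d : ℕ) :
    coeff d ((X * mk fun s => α ^ s) ^ j) =
      if j ≤ d then α ^ (d - j) * (d - 1).choose (j - 1) else 0 := by
  obtain ⟨k, rfl⟩ : ∃ k, j = k + 1 := ⟨j - 1, by omega⟩
  rw [mul_pow, coeff_X_pow_mul']
  split_ifs with h
  · rw [coeff_mk_pow_pow_succ, show k + (d - (k + 1)) = d - 1 by omega, Nat.add_sub_cancel]
  · rfl

theorem hasSubst_X_mul_mk_pow (α : R) : HasSubst (X * mk fun s => α ^ s : R⟦X⟧) :=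
  HasSubst.of_constantCoeff_zero' (by simp)

theorem coeff_subst_X_mul_mk_pow (α : R) (f : R⟦X⟧) (d : ℕ) :
    coeff d (f.subst (X * mk fun s => α ^ s)) =
      if d = 0 then constantCoeff f
      else ∑ j ∈ Icc 1 d, α ^ (d - j) * ((d - 1).choose (j - 1) : R) * coeff j f := by
  rw [coeff_subst' (hasSubst_X_mul_mk_pow α)]
  split_ifs with hd
  · subst hd
    rw [finsum_eq_single _ 0 fun j hj => by simp [coeff_X_mul_mk_pow_pow hj, hj]]
    simp
  · rw [finsum_eq_sum_of_support_subset (s := Icc 1 d)]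
    · refine sum_congr rfl fun j hj => ?_
      rw [mem_Icc] at hj
      rw [coeff_X_mul_mk_pow_pow (by omega), if_pos hj.2, smul_eq_mul, mul_comm]
    · intro j hj
      rw [coe_Icc, Set.mem_Icc]
      by_contra h
      refine Function.mem_support.mp hj ?_
      rcases Nat.eq_zero_or_pos j with rfl | hj0
      · simp [coeff_one, hd]
      · rw [coeff_X_mul_mk_pow_pow hj0.ne', if_neg (by omega), smul_zero]

theorem mk_pow_mul_one_sub_C_mul_X (a : R) : (mk fun t => a ^ t) * (1 - C a * X) = 1 := by
  have h := congrArg (rescale a) (mk_one_mul_one_sub_eq_one (S := R))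
  rw [map_mul, map_sub, map_one, rescale_X, rescale_mk] at h
  simpa only [Pi.one_apply, mul_one] using h

theorem prod_mk_pow_mul_prod_one_sub_C_mul_X {ι : Type*} (s : Finset ι) (y : ι → R) :
    (∏ i ∈ s, mk fun t => y i ^ t) * ∏ i ∈ s, (1 - C (y i) * X) = 1 := by
  rw [← prod_mul_distrib]
  exact prod_eq_one fun i _ => mk_pow_mul_one_sub_C_mul_X (y i)

theorem coeff_prod_mk_pow {n : ℕ} (y : Fin n → R) (m : ℕ) :
    coeff m (∏ i, mk fun t => y i ^ t) = hps n m y := by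
  classical
  rw [coeff_prod, hps]
  refine sum_nbij' (fun l => ⇑l) (fun c => Finsupp.equivFunOnFinite.symm c) (fun l hl => ?_)
    (fun c hc => ?_) (fun l _ => by simp) (fun c _ => rfl) (fun l _ => by simp only [coeff_mk])
  · rw [mem_finsuppAntidiag] at hl
    exact Finset.Nat.mem_antidiagonalTuple.mpr hl.1
  · rw [Finset.Nat.mem_antidiagonalTuple] at hc
    simpa [mem_finsuppAntidiag] using hc

theorem coeff_prod_one_sub_C_mul_X {n : ℕ} (y : Fin n → R) (k : ℕ) :
    coeff k (∏ i, (1 - C (y i) * X)) = (-1) ^ k * eps n k y := by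
  have hexpand : ∏ i, (1 - C (y i) * X) = ∑ t ∈ univ.powerset, C (∏ i ∈ t, -y i) * X ^ #t := by
    simp only [sub_eq_add_neg, ← neg_mul, ← map_neg, prod_one_add, prod_mul_distrib, prod_const,
      map_prod]
  rw [hexpand, map_sum, eps, mul_sum]
  simp only [coeff_C_mul_X_pow, eq_comm (a := k)]
  rw [← sum_filter, powersetCard_eq_filter]
  refine sum_congr rfl fun t ht => ?_
  rw [prod_neg, (mem_filter.mp ht).2]

section

variable (n : ℕ) (α : R) (x : Fin n → R)

theorem mk_grow_eq_subst : mk (grow n α x) = (∏ i, mk fun t => x i ^ t).subst (X * mk fun s => α ^ s) := by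
  ext d
  rw [coeff_mk, coeff_subst_X_mul_mk_pow, grow, map_prod]
  simp only [coeff_prod_mk_pow, constantCoeff_mk, pow_zero, prod_const_one]

theorem mk_ghat_eq_subst : mk (ghat n α x) = (∏ i, (1 - C (x i) * X)).subst (X * mk fun s => α ^ s) := by
  ext d
  rw [coeff_mk, coeff_subst_X_mul_mk_pow, ghat, map_prod]
  simp only [coeff_prod_one_sub_C_mul_X, map_sub, map_one, map_mul, constantCoeff_X, mul_zero,
    sub_zero, prod_const_one, mul_assoc]

theorem mk_grow_mul_mk_ghat : mk (grow n α x) * mk (ghat n α x) = 1 := by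
  rw [mk_grow_eq_subst, mk_ghat_eq_subst, ← coe_substAlgHom (hasSubst_X_mul_mk_pow α), ← map_mul,
    prod_mk_pow_mul_prod_one_sub_C_mul_X, map_one]

end

end PowerSeries

open PowerSeries


/-- for every `N ≥ 1`, `∑_{i=0}^N g_{(i)}·ĝ_{N-i} = 0`
(equivalently `∑_i g^{(α,β)}_{(i)}(x)·g^{(β,α)}_{(1^{N-i})}(-x) = δ_{N,0}`).
Stated over an arbitrary commutative ring, which subsumes `ℚ[α, x₁, …, xₙ]`. -/
theorem stmt12 {R : Type*} [CommRing R] (n : ℕ) (α : R) (x : Fin n → R) (N : ℕ) (hN : 1 ≤ N) :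
    ∑ i ∈ Finset.range (N + 1), grow n α x i * ghat n α x (N - i) = 0 := by
  have h := congrArg (coeff N) (mk_grow_mul_mk_ghat n α x)
  rw [coeff_mul, Finset.Nat.sum_antidiagonal_eq_sum_range_succ_mk, coeff_one,
    if_neg (by omega)] at h
  simpa only [coeff_mk] using h
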